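/- arXiv:0708.2644 — 5 statements merged into one kernel-verified Lean document; each statement's English description precedes it below -/
import Mathlib

section
/- Let $c>0$ and let $X:(0,\infty)\to[0,\infty)$ be differentiable with $X'(t)\le 0$ and $\frac{d}{dt}(e^{ct}X(t))\le 0$ for all $t>0$. For $p\ge 0$ define $Y_p(0)=-\int_0^\infty r^p\,dX(r)$ (Riemann–Stieltjes integral). Then for all $0\le p_1<p_2<\infty$, $\frac{c^{p_2}Y_{p_2}(0)}{\Gamma(p_2+1)}\le \frac{c^{p_1}Y_{p_1}(0)}{\Gamma(p_1+1)}$. -/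
/-!
With `E t = e^{ct} X t`, the quantity `c^p Y_p / Γ(p+1)` is `∫ E dγ_p`, the mean of the
nonincreasing function `E` under the Gamma law `γ_p` of shape `p` and rate `c`. For `p₁ < p₂` the
density of `γ_{p₂}` is a constant multiple of `r^{p₂-p₁}` times that of `γ_{p₁}`; since this factor
increases while `E` decreases, Chebyshev's integral inequality gives `∫ E dγ_{p₂} ≤ ∫ E dγ_{p₁}`.
For `p₁ = 0` one uses instead `E ≤ E(0⁺) = Y_0`.
-/

open MeasureTheory Set Filter ProbabilityTheory Real Topology
open scoped ENNReal

theorem ENNReal.mul_add_mul_le_mul_add_mul {a b c d : ℝ≥0∞} (hab : a ≤ b) (hcd : c ≤ d) :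
    a * d + b * c ≤ a * c + b * d := by
  obtain ⟨e, rfl⟩ : ∃ e, b = a + e := ⟨b - a, (add_tsub_cancel_of_le hab).symm⟩
  calc a * d + (a + e) * c = a * c + (a * d + e * c) := by ring
    _ ≤ a * c + (a * d + e * d) := by gcongr
    _ = a * c + (a + e) * d := by ring

theorem mul_add_mul_le_mul_add_mul_of_monotoneOn_of_antitoneOn {α : Type*} [LinearOrder α]
    {s : Set α} {f g : α → ℝ≥0∞} (hf : MonotoneOn f s) (hg : AntitoneOn g s)
    {u v : α} (hu : u ∈ s) (hv : v ∈ s) :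
    f u * g u + f v * g v ≤ f u * g v + f v * g u := by
  rcases le_total u v with huv | hvu
  · exact ENNReal.mul_add_mul_le_mul_add_mul (hf hu hv huv) (hg hu hv huv)
  · rw [add_comm (f u * g u), add_comm (f u * g v)]
    exact ENNReal.mul_add_mul_le_mul_add_mul (hf hv hu hvu) (hg hv hu hvu)

section Chebyshev

variable {α : Type*} [MeasurableSpace α] {μ : Measure α}

theorem lintegral_lintegral_mul_add_mul {a b c d : α → ℝ≥0∞} (ha : AEMeasurable a μ)
    (hb : AEMeasurable b μ) (hc : AEMeasurable c μ) (hd : AEMeasurable d μ) :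
    ∫⁻ u, ∫⁻ v, a u * b v + c u * d v ∂μ ∂μ =
      (∫⁻ u, a u ∂μ) * (∫⁻ v, b v ∂μ) + (∫⁻ u, c u ∂μ) * (∫⁻ v, d v ∂μ) := by
  have inner (u : α) : ∫⁻ v, a u * b v + c u * d v ∂μ =
      a u * ∫⁻ v, b v ∂μ + c u * ∫⁻ v, d v ∂μ := by
    rw [lintegral_add_left' (hb.const_mul _), lintegral_const_mul'' _ hb,
      lintegral_const_mul'' _ hd]
  simp_rw [inner]
  rw [lintegral_add_left' (ha.mul_const _), lintegral_mul_const'' _ ha,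
    lintegral_mul_const'' _ hc]

/-- Chebyshev's integral inequality with weight `w`, for oppositely ordered `f` and `g`. -/
theorem lintegral_mul_lintegral_le_of_rearrangement {w f g : α → ℝ≥0∞}
    (hw : AEMeasurable w μ) (hf : AEMeasurable f μ) (hg : AEMeasurable g μ)
    (hfg : ∀ᵐ u ∂μ, ∀ᵐ v ∂μ, f u * g u + f v * g v ≤ f u * g v + f v * g u) :
    (∫⁻ u, w u ∂μ) * (∫⁻ u, w u * f u * g u ∂μ) ≤
      (∫⁻ u, w u * f u ∂μ) * (∫⁻ u, w u * g u ∂μ) := by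
  have hwf : AEMeasurable (fun u ↦ w u * f u) μ := hw.mul hf
  have hwg : AEMeasurable (fun u ↦ w u * g u) μ := hw.mul hg
  have hwfg : AEMeasurable (fun u ↦ w u * f u * g u) μ := hwf.mul hg
  have key : ∫⁻ u, ∫⁻ v, (w u * f u * g u) * w v + w u * (w v * f v * g v) ∂μ ∂μ ≤
      ∫⁻ u, ∫⁻ v, (w u * f u) * (w v * g v) + (w u * g u) * (w v * f v) ∂μ ∂μ := by
    refine lintegral_mono_ae ?_
    filter_upwards [hfg] with u hu
    refine lintegral_mono_ae ?_
    filter_upwards [hu] with v hv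
    calc _ = w u * w v * (f u * g u + f v * g v) := by ring
      _ ≤ w u * w v * (f u * g v + f v * g u) := by gcongr
      _ = _ := by ring
  rw [lintegral_lintegral_mul_add_mul hwfg hw hw hwfg,
    lintegral_lintegral_mul_add_mul hwf hwg hwg hwf, mul_comm (∫⁻ u, w u * f u * g u ∂μ),
    mul_comm (∫⁻ u, w u * g u ∂μ), ← two_mul, ← two_mul] at key
  exact (ENNReal.mul_le_mul_iff_right two_ne_zero ENNReal.ofNat_ne_top).1 key

end Chebyshev

theorem AntitoneOn.le_of_tendsto_nhdsGT {α β : Type*} [LinearOrder α] [TopologicalSpace α]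
    [OrderTopology α] [DenselyOrdered α] [NoMaxOrder α] [TopologicalSpace β] [Preorder β]
    [ClosedIciTopology β] {f : α → β} {a : α} {L : β} (hf : AntitoneOn f (Ioi a))
    (hL : Tendsto f (𝓝[>] a) (𝓝 L)) {x : α} (hx : a < x) : f x ≤ L := by
  refine ge_of_tendsto hL ?_
  filter_upwards [Ioo_mem_nhdsGT hx] with y hy
  exact hf hy.1 (hy.1.trans hy.2) hy.2.le

theorem measurable_gammaPDF (a r : ℝ) : Measurable (gammaPDF a r) :=
  (measurable_gammaPDFReal a r).ennreal_ofReal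

theorem setLIntegral_gammaPDF_Ioi {a r : ℝ} (ha : 0 < a) (hr : 0 < r) :
    ∫⁻ x in Ioi 0, gammaPDF a r x = 1 := by
  rw [setLIntegral_congr Ioi_ae_eq_Ici, setLIntegral_eq_of_support_subset,
    lintegral_gammaPDF_eq_one ha hr]
  intro x hx
  by_contra hneg
  exact hx (gammaPDF_of_neg (not_le.1 hneg))

theorem gammaPDF_mul_ofReal_rpow {a b r x : ℝ} (ha : 0 < a) (hb : 0 ≤ b) (hr : 0 < r)
    (hx : 0 < x) :
    gammaPDF a r x * ENNReal.ofReal (x ^ b) =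
      ENNReal.ofReal (r ^ a * Gamma (a + b) / (r ^ (a + b) * Gamma a)) *
        gammaPDF (a + b) r x := by
  rw [gammaPDF_of_nonneg hx.le, gammaPDF_of_nonneg hx.le, ← ENNReal.ofReal_mul (by positivity),
    ← ENNReal.ofReal_mul (by positivity), show a + b - 1 = a - 1 + b by ring,
    rpow_add hx, rpow_add hr]
  congr 1
  field_simp

theorem setLIntegral_gammaPDF_mul_le {a r : ℝ} (ha : 0 < a) (hr : 0 < r) {G : ℝ → ℝ≥0∞}
    {L : ℝ≥0∞} (hG : ∀ x ∈ Ioi 0, G x ≤ L) :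
    ∫⁻ x in Ioi 0, gammaPDF a r x * G x ≤ L :=
  calc ∫⁻ x in Ioi 0, gammaPDF a r x * G x ≤ ∫⁻ x in Ioi 0, gammaPDF a r x * L :=
        setLIntegral_mono' measurableSet_Ioi fun x hx ↦ by gcongr; exact hG x hx
    _ = L := by
      rw [lintegral_mul_const _ (measurable_gammaPDF a r), setLIntegral_gammaPDF_Ioi ha hr,
        one_mul]

theorem setLIntegral_gammaPDF_mul_le_of_antitoneOn {r p₁ p₂ : ℝ} (hr : 0 < r) (hp₁ : 0 < p₁)
    (hp₁₂ : p₁ ≤ p₂) {G : ℝ → ℝ≥0∞} (hG : AntitoneOn G (Ioi 0)) :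
    ∫⁻ x in Ioi 0, gammaPDF p₂ r x * G x ≤ ∫⁻ x in Ioi 0, gammaPDF p₁ r x * G x := by
  obtain ⟨q, hq, rfl⟩ : ∃ q, 0 ≤ q ∧ p₂ = p₁ + q := ⟨p₂ - p₁, by linarith, by ring⟩
  set K := ENNReal.ofReal (r ^ p₁ * Gamma (p₁ + q) / (r ^ (p₁ + q) * Gamma p₁))
  have hK : K ≠ 0 := (ENNReal.ofReal_pos.2 (by positivity)).ne'
  have hweight : ∀ᵐ x ∂(volume.restrict (Ioi 0)),
      gammaPDF p₁ r x * ENNReal.ofReal (x ^ q) = K * gammaPDF (p₁ + q) r x :=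
    ae_restrict_of_forall_mem measurableSet_Ioi fun x hx ↦ gammaPDF_mul_ofReal_rpow hp₁ hq hr hx
  have hpow : MonotoneOn (fun x : ℝ ↦ ENNReal.ofReal (x ^ q)) (Ioi 0) := fun x hx y _ hxy ↦
    ENNReal.ofReal_le_ofReal (rpow_le_rpow (le_of_lt hx) hxy hq)
  have hcheb := lintegral_mul_lintegral_le_of_rearrangement (μ := volume.restrict (Ioi 0))
    (w := gammaPDF p₁ r) (f := fun x ↦ ENNReal.ofReal (x ^ q)) (g := G)
    (measurable_gammaPDF p₁ r).aemeasurable (by fun_prop)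
    (aemeasurable_restrict_of_antitoneOn measurableSet_Ioi hG) <| by
      filter_upwards [ae_restrict_mem measurableSet_Ioi] with u hu
      filter_upwards [ae_restrict_mem measurableSet_Ioi] with v hv
      exact mul_add_mul_le_mul_add_mul_of_monotoneOn_of_antitoneOn hpow hG hu hv
  rw [setLIntegral_gammaPDF_Ioi hp₁ hr, one_mul, lintegral_congr_ae hweight,
    lintegral_congr_ae (hweight.mono fun x hx ↦ by rw [hx, mul_assoc]),
    lintegral_const_mul' _ _ ENNReal.ofReal_ne_top, lintegral_const_mul' _ _ ENNReal.ofReal_ne_top,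
    setLIntegral_gammaPDF_Ioi (add_pos_of_pos_of_nonneg hp₁ hq) hr, mul_one] at hcheb
  exact (ENNReal.mul_le_mul_iff_right hK ENNReal.ofReal_ne_top).1 hcheb

theorem ofReal_mul_lintegral_rpow_mul_eq_lintegral_gammaPDF_mul {c p : ℝ} (hc : 0 < c)
    (hp : 0 < p) (X : ℝ → ℝ) :
    ENNReal.ofReal (c ^ p / Gamma (p + 1)) *
        (ENNReal.ofReal p * ∫⁻ r in Ioi 0, ENNReal.ofReal (r ^ (p - 1) * X r)) =
      ∫⁻ r in Ioi 0, gammaPDF p c r * ENNReal.ofReal (exp (c * r) * X r) := by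
  rw [← mul_assoc, ← ENNReal.ofReal_mul (by positivity),
    ← lintegral_const_mul' _ _ ENNReal.ofReal_ne_top]
  refine setLIntegral_congr_fun measurableSet_Ioi fun r hr ↦ ?_
  rw [gammaPDF, ← ENNReal.ofReal_mul (gammaPDFReal_nonneg hp hc r),
    ← ENNReal.ofReal_mul (by positivity), gammaPDFReal, if_pos (le_of_lt hr)]
  congr 1
  rw [Gamma_add_one hp.ne', exp_neg]
  field_simp

theorem stmt0_general (c : ℝ) (hc : 0 < c) (X : ℝ → ℝ)
    (hXdiff : ∀ t > 0, DifferentiableAt ℝ X t)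
    (hXe : ∀ t > 0, deriv (fun s => Real.exp (c * s) * X s) t ≤ 0)
    (Y : ℝ → ℝ≥0∞)
    (hY : ∀ p > (0 : ℝ),
      Y p = ENNReal.ofReal p * ∫⁻ r in Ioi (0 : ℝ), ENNReal.ofReal (r ^ (p - 1) * X r))
    (hY0 : Tendsto (fun t => ENNReal.ofReal (X t)) (nhdsWithin 0 (Ioi 0)) (nhds (Y 0)))
    (p₁ p₂ : ℝ) (hp₁ : 0 ≤ p₁) (hp₁₂ : p₁ < p₂) :
    ENNReal.ofReal (c ^ p₂ / Real.Gamma (p₂ + 1)) * Y p₂ ≤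
      ENNReal.ofReal (c ^ p₁ / Real.Gamma (p₁ + 1)) * Y p₁ := by
  have hdiff : ∀ t ∈ Ioi (0 : ℝ), DifferentiableAt ℝ (fun s ↦ exp (c * s) * X s) t :=
    fun t ht ↦ ((differentiableAt_id.const_mul c).exp).mul (hXdiff t ht)
  have hE : AntitoneOn (fun s ↦ exp (c * s) * X s) (Ioi 0) := by
    refine antitoneOn_of_deriv_nonpos (convex_Ioi 0)
      (fun t ht ↦ (hdiff t ht).continuousAt.continuousWithinAt) ?_ ?_ <;> rw [interior_Ioi]
    · exact fun t ht ↦ (hdiff t ht).differentiableWithinAt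
    · exact hXe
  have hG : AntitoneOn (fun s ↦ ENNReal.ofReal (exp (c * s) * X s)) (Ioi 0) :=
    fun s hs t ht hst ↦ ENNReal.ofReal_le_ofReal (hE hs ht hst)
  have hp₂ : 0 < p₂ := hp₁.trans_lt hp₁₂
  rw [hY p₂ hp₂, ofReal_mul_lintegral_rpow_mul_eq_lintegral_gammaPDF_mul hc hp₂]
  rcases hp₁.eq_or_lt with rfl | hp₁
  · have hlim : Tendsto (fun s ↦ ENNReal.ofReal (exp (c * s) * X s)) (𝓝[>] 0) (𝓝 (Y 0)) := by
      have hexp : Tendsto (fun s ↦ ENNReal.ofReal (exp (c * s))) (𝓝[>] 0) (𝓝 1) :=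
        ((ENNReal.continuous_ofReal.comp (by fun_prop : Continuous fun s ↦ exp (c * s))).tendsto'
          0 1 (by simp)).mono_left nhdsWithin_le_nhds
      simpa only [ENNReal.ofReal_mul (exp_pos _).le, one_mul] using
        ENNReal.Tendsto.mul hexp (Or.inl one_ne_zero) hY0 (Or.inr ENNReal.one_ne_top)
    simpa using setLIntegral_gammaPDF_mul_le hp₂ hc fun x hx ↦ hG.le_of_tendsto_nhdsGT hlim hx
  · rw [hY p₁ hp₁, ofReal_mul_lintegral_rpow_mul_eq_lintegral_gammaPDF_mul hc hp₁]
    exact setLIntegral_gammaPDF_mul_le_of_antitoneOn hc hp₁ hp₁₂.le hG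

/-- Optimal monotonicity (basic form): if `X : (0,∞) → [0,∞)` is differentiable with
`X' ≤ 0` and `(e^{ct}X(t))' ≤ 0`, and `Y p = -∫₀^∞ r^p dX(r)` (Riemann–Stieltjes,
equal to `p ∫₀^∞ r^{p-1} X(r) dr` for `p > 0` and to `X(0⁺)` for `p = 0`), then
`p ↦ c^p Y p / Γ(p+1)` is nonincreasing on `[0,∞)`. -/
theorem stmt0 (c : ℝ) (hc : 0 < c) (X : ℝ → ℝ)
    (hXpos : ∀ t > 0, 0 ≤ X t)
    (hXdiff : ∀ t > 0, DifferentiableAt ℝ X t)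
    (hX' : ∀ t > 0, deriv X t ≤ 0)
    (hXe : ∀ t > 0, deriv (fun s => Real.exp (c * s) * X s) t ≤ 0)
    (Y : ℝ → ℝ≥0∞)
    (hY : ∀ p > (0 : ℝ),
      Y p = ENNReal.ofReal p * ∫⁻ r in Ioi (0 : ℝ), ENNReal.ofReal (r ^ (p - 1) * X r))
    (hY0 : Tendsto (fun t => ENNReal.ofReal (X t)) (nhdsWithin 0 (Ioi 0)) (nhds (Y 0)))
    (p₁ p₂ : ℝ) (hp₁ : 0 ≤ p₁) (hp₁₂ : p₁ < p₂) :
    ENNReal.ofReal (c ^ p₂ / Real.Gamma (p₂ + 1)) * Y p₂ ≤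
      ENNReal.ofReal (c ^ p₁ / Real.Gamma (p₁ + 1)) * Y p₁ :=
  stmt0_general c hc X hXdiff hXe Y hY hY0 p₁ p₂ hp₁ hp₁₂
end

section
/- Let $c>0$ and let $X:(0,\infty)\to[0,\infty)$ satisfy $X'(t)\le 0$ and $\frac{d}{dt}(e^{ct}X(t))\le 0$ for $t>0$. Fix $0\le p_1<p_2<\infty$. Then equality $\frac{c^{p_2}Y_{p_2}(0)}{\Gamma(p_2+1)}=\frac{c^{p_1}Y_{p_1}(0)}{\Gamma(p_1+1)}<\infty$ holds if and only if $X(0):=\lim_{t\to0^+}X(t)<\infty$ and $X(t)=e^{-ct}X(0)$ for all $t\ge 0$. -/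
open MeasureTheory Set Filter ProbabilityTheory Real
open scoped ENNReal Topology

/-!
With `g(r) = e^{cr} X(r)`, which is nonnegative and nonincreasing, `c^p Y_p(0) / Γ(p+1)` is the
mean of `g` under the Gamma law of shape `p` and rate `c` when `p > 0`, and `g(0⁺) = sup g` when
`p = 0`. Gamma densities of shapes `p₁ < p₂` cross exactly once, at some `r₀`, so
`(φ_{p₁} - φ_{p₂}) (g - g(r₀)) ≥ 0`; equal means force this product to vanish almost everywhere,
hence `g` is constant. For `p₁ = 0` the same argument runs with `φ_{p₁} = 0` and `g(0⁺)` in place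
of `g(r₀)`.
-/

noncomputable def gammaMean (p c : ℝ) (g : ℝ → ℝ) : ℝ≥0∞ :=
  ∫⁻ r in Ioi 0, ENNReal.ofReal (gammaPDFReal p c r * g r)

lemma setLIntegral_Ioi_gammaPDFReal {p c : ℝ} (hp : 0 < p) (hc : 0 < c) :
    ∫⁻ r in Ioi 0, ENNReal.ofReal (gammaPDFReal p c r) = 1 := by
  rw [Measure.restrict_congr_set Ioi_ae_eq_Ici, ← lintegral_gammaPDF_eq_one hp hc]
  refine setLIntegral_eq_of_support_subset fun r hr => ?_
  by_contra h
  exact hr (by simp [gammaPDFReal, show ¬ 0 ≤ r from h])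

lemma gammaMean_of_eqOn_const {p c a : ℝ} (hp : 0 < p) (hc : 0 < c) {g : ℝ → ℝ}
    (hg : EqOn g (fun _ => a) (Ioi 0)) : gammaMean p c g = ENNReal.ofReal a := by
  calc gammaMean p c g
      = ∫⁻ r in Ioi 0, ENNReal.ofReal a * ENNReal.ofReal (gammaPDFReal p c r) := by
        refine setLIntegral_congr_fun measurableSet_Ioi fun r hr => ?_
        rw [hg hr, ENNReal.ofReal_mul (gammaPDFReal_nonneg hp hc r), mul_comm]
    _ = ENNReal.ofReal a := by
        rw [lintegral_const_mul' _ _ ENNReal.ofReal_ne_top,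
          setLIntegral_Ioi_gammaPDFReal hp hc, mul_one]

lemma ofReal_rpow_div_Gamma_mul_eq_gammaMean {p c : ℝ} (hp : 0 < p) (hc : 0 < c) (X : ℝ → ℝ) :
    ENNReal.ofReal (c ^ p / Gamma (p + 1)) *
        (ENNReal.ofReal p * ∫⁻ r in Ioi 0, ENNReal.ofReal (r ^ (p - 1) * X r)) =
      gammaMean p c fun r => exp (c * r) * X r := by
  have hk : 0 ≤ c ^ p / Gamma (p + 1) * p := by
    have := rpow_pos_of_pos hc p
    have := Gamma_pos_of_pos (add_pos hp one_pos)
    positivity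
  rw [← mul_assoc, ← ENNReal.ofReal_mul (by positivity),
    ← lintegral_const_mul' _ _ ENNReal.ofReal_ne_top]
  refine setLIntegral_congr_fun measurableSet_Ioi fun r (hr : 0 < r) => ?_
  rw [← ENNReal.ofReal_mul hk, gammaPDFReal, if_pos hr.le, Gamma_add_one hp.ne', exp_neg]
  have := Gamma_pos_of_pos hp
  field_simp

lemma exists_sign_change_gammaPDFReal_sub {p₁ p₂ c : ℝ} (hp₁ : 0 < p₁) (hp₁₂ : p₁ < p₂)
    (hc : 0 < c) :
    ∃ r₀ > 0, ∀ r > 0, r ≠ r₀ →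
      0 < (gammaPDFReal p₁ c r - gammaPDFReal p₂ c r) * (r₀ - r) := by
  set q := p₂ - p₁ with hq_def
  have hq : 0 < q := sub_pos.mpr hp₁₂
  set K := c ^ (p₁ - p₂) * (Gamma p₂ / Gamma p₁) with hK_def
  have hK : 0 < K := mul_pos (rpow_pos_of_pos hc _) (div_pos (Gamma_pos_of_pos (by linarith))
    (Gamma_pos_of_pos hp₁))
  refine ⟨K ^ q⁻¹, rpow_pos_of_pos hK _, fun r (hr : 0 < r) hne => ?_⟩
  have hdiff : gammaPDFReal p₁ c r - gammaPDFReal p₂ c r =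
      (c ^ p₂ / Gamma p₂ * r ^ (p₁ - 1) * exp (-(c * r))) * (K - r ^ q) := by
    have h₁ : r ^ (p₂ - 1) = r ^ (p₁ - 1) * r ^ q := by rw [← rpow_add hr, hq_def]; ring_nf
    have h₂ : c ^ p₁ = c ^ p₂ * c ^ (p₁ - p₂) := by rw [← rpow_add hc]; ring_nf
    have := Gamma_pos_of_pos hp₁
    have := Gamma_pos_of_pos (hp₁.trans hp₁₂)
    rw [gammaPDFReal, gammaPDFReal, if_pos hr.le, if_pos hr.le, h₁, h₂, hK_def]
    field_simp
  have hA : 0 < c ^ p₂ / Gamma p₂ * r ^ (p₁ - 1) * exp (-(c * r)) := by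
    have := rpow_pos_of_pos hc p₂
    have := rpow_pos_of_pos hr (p₁ - 1)
    have := Gamma_pos_of_pos (hp₁.trans hp₁₂)
    positivity
  rw [hdiff, mul_assoc]
  refine mul_pos hA ?_
  have hKq : K = (K ^ q⁻¹) ^ q := (rpow_inv_rpow hK.le hq.ne').symm
  rcases hne.lt_or_gt with h | h
  · have := rpow_lt_rpow hr.le h hq
    exact mul_pos (by linarith) (by linarith)
  · have := rpow_lt_rpow (rpow_pos_of_pos hK _).le h hq
    exact mul_pos_of_neg_of_neg (by linarith) (by linarith)

/-- Integrate the pointwise inequality `v g + a u ≤ u g + a v`: equality of the integrals forces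
equality almost everywhere. -/
lemma ae_mul_sub_eq_zero_of_lintegral_eq {α : Type*} [MeasurableSpace α] {μ : Measure α}
    {u v g : α → ℝ} {a : ℝ} (hu : AEMeasurable u μ) (hv : AEMeasurable v μ)
    (hg : AEMeasurable g μ) (hu0 : 0 ≤ᵐ[μ] u) (hv0 : 0 ≤ᵐ[μ] v) (hg0 : 0 ≤ᵐ[μ] g) (ha : 0 ≤ a)
    (hsign : ∀ᵐ x ∂μ, 0 ≤ (u x - v x) * (g x - a))
    (heq : ∫⁻ x, ENNReal.ofReal (u x * g x) ∂μ + ENNReal.ofReal a * ∫⁻ x, ENNReal.ofReal (v x) ∂μ =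
      ∫⁻ x, ENNReal.ofReal (v x * g x) ∂μ + ENNReal.ofReal a * ∫⁻ x, ENNReal.ofReal (u x) ∂μ)
    (hfin : ∫⁻ x, ENNReal.ofReal (v x * g x) ∂μ +
      ENNReal.ofReal a * ∫⁻ x, ENNReal.ofReal (u x) ∂μ ≠ ∞) :
    ∀ᵐ x ∂μ, (u x - v x) * (g x - a) = 0 := by
  have hsplit : ∀ {f h : α → ℝ}, AEMeasurable f μ → 0 ≤ᵐ[μ] f → 0 ≤ᵐ[μ] h →
      ∫⁻ x, ENNReal.ofReal (f x * g x + a * h x) ∂μ =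
        ∫⁻ x, ENNReal.ofReal (f x * g x) ∂μ + ENNReal.ofReal a * ∫⁻ x, ENNReal.ofReal (h x) ∂μ := by
    intro f h hf hf0 hh0
    rw [← lintegral_const_mul' _ _ ENNReal.ofReal_ne_top,
      ← lintegral_add_left' (f := fun x => ENNReal.ofReal (f x * g x)) (hf.mul hg).ennreal_ofReal]
    refine lintegral_congr_ae ?_
    filter_upwards [hf0, hh0, hg0] with x hfx hhx hgx
    rw [ENNReal.ofReal_add (mul_nonneg hfx hgx) (mul_nonneg ha hhx), ENNReal.ofReal_mul ha]
  have hle : (fun x => ENNReal.ofReal (v x * g x + a * u x)) ≤ᵐ[μ]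
      fun x => ENNReal.ofReal (u x * g x + a * v x) := by
    filter_upwards [hsign] with x hx
    exact ENNReal.ofReal_le_ofReal (by nlinarith)
  have hae := ae_eq_of_ae_le_of_lintegral_le hle (by rwa [hsplit hv hv0 hu0])
    ((hu.mul hg).add (hv.const_mul a)).ennreal_ofReal
    (by rw [hsplit hu hu0 hv0, hsplit hv hv0 hu0, heq])
  filter_upwards [hae, hu0, hv0, hg0] with x hx hux hvx hgx
  have := (ENNReal.ofReal_eq_ofReal_iff (add_nonneg (mul_nonneg hvx hgx) (mul_nonneg ha hux))
    (add_nonneg (mul_nonneg hux hgx) (mul_nonneg ha hvx))).mp hx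
  linarith

lemma eqOn_Ioi_of_ae_mul_sub_eq_zero {g w : ℝ → ℝ} {a : ℝ} (hg : ContinuousOn g (Ioi 0))
    (hw : ∀ᵐ r ∂volume.restrict (Ioi 0), w r ≠ 0)
    (h : ∀ᵐ r ∂volume.restrict (Ioi 0), w r * (g r - a) = 0) :
    EqOn g (fun _ => a) (Ioi 0) := by
  refine Measure.eqOn_open_of_ae_eq (μ := volume) ?_ isOpen_Ioi hg continuousOn_const
  filter_upwards [hw, h] with r hwr hr
  exact sub_eq_zero.mp ((mul_eq_zero.mp hr).resolve_left hwr)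

lemma eqOn_const_of_gammaMean_eq {p₁ p₂ c : ℝ} (hp₁ : 0 < p₁) (hp₁₂ : p₁ < p₂) (hc : 0 < c)
    {g : ℝ → ℝ} (hg : AntitoneOn g (Ioi 0)) (hgc : ContinuousOn g (Ioi 0))
    (hg0 : ∀ r > 0, 0 ≤ g r) (heq : gammaMean p₂ c g = gammaMean p₁ c g)
    (hfin : gammaMean p₁ c g ≠ ∞) :
    ∃ a, EqOn g (fun _ => a) (Ioi 0) := by
  have hp₂ : 0 < p₂ := hp₁.trans hp₁₂
  obtain ⟨r₀, hr₀, hcross⟩ := exists_sign_change_gammaPDFReal_sub hp₁ hp₁₂ hc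
  refine ⟨g r₀, eqOn_Ioi_of_ae_mul_sub_eq_zero
    (w := fun r => gammaPDFReal p₁ c r - gammaPDFReal p₂ c r) hgc ?_ ?_⟩
  · filter_upwards [ae_restrict_mem measurableSet_Ioi,
      (countable_singleton r₀).ae_notMem _] with r hr hr₀' h
    simpa [h] using hcross r hr hr₀'
  have hsign : ∀ r ∈ Ioi (0 : ℝ),
      0 ≤ (gammaPDFReal p₁ c r - gammaPDFReal p₂ c r) * (g r - g r₀) := by
    intro r hr
    rcases eq_or_ne r r₀ with rfl | hne
    · simp
    have hcr := hcross r hr hne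
    rcases hne.lt_or_gt with h | h
    · have := hg hr hr₀ h.le
      nlinarith
    · have := hg hr₀ hr h.le
      nlinarith
  simp only [gammaMean] at heq hfin
  refine ae_mul_sub_eq_zero_of_lintegral_eq (measurable_gammaPDFReal _ _).aemeasurable
    (measurable_gammaPDFReal _ _).aemeasurable (hgc.aemeasurable measurableSet_Ioi)
    (ae_of_all _ (gammaPDFReal_nonneg hp₁ hc)) (ae_of_all _ (gammaPDFReal_nonneg hp₂ hc))
    (ae_restrict_of_forall_mem measurableSet_Ioi hg0) (hg0 r₀ hr₀)
    (ae_restrict_of_forall_mem measurableSet_Ioi hsign) ?_ ?_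
  · rw [setLIntegral_Ioi_gammaPDFReal hp₁ hc, setLIntegral_Ioi_gammaPDFReal hp₂ hc, heq]
  · rw [setLIntegral_Ioi_gammaPDFReal hp₁ hc, heq]
    exact ENNReal.add_ne_top.mpr ⟨hfin, by simp⟩

lemma eqOn_const_of_gammaMean_eq_of_tendsto {p c a : ℝ} (hp : 0 < p) (hc : 0 < c) {g : ℝ → ℝ}
    (hg : AntitoneOn g (Ioi 0)) (hgc : ContinuousOn g (Ioi 0)) (hg0 : ∀ r > 0, 0 ≤ g r)
    (hlim : Tendsto g (𝓝[>] 0) (𝓝 a)) (heq : gammaMean p c g = ENNReal.ofReal a) :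
    EqOn g (fun _ => a) (Ioi 0) := by
  have ha : 0 ≤ a := ge_of_tendsto hlim (eventually_mem_nhdsWithin.mono hg0)
  have hle : ∀ t ∈ Ioi (0 : ℝ), g t ≤ a := fun t ht =>
    ge_of_tendsto hlim (mem_of_superset (Ioo_mem_nhdsGT ht) fun s hs => hg hs.1 ht hs.2.le)
  refine eqOn_Ioi_of_ae_mul_sub_eq_zero (w := fun r => 0 - gammaPDFReal p c r) hgc
    (ae_restrict_of_forall_mem measurableSet_Ioi fun r hr => ?_) ?_
  · simpa using (gammaPDFReal_pos hp hc hr).ne'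
  simp only [gammaMean] at heq
  refine ae_mul_sub_eq_zero_of_lintegral_eq aemeasurable_const
    (measurable_gammaPDFReal _ _).aemeasurable (hgc.aemeasurable measurableSet_Ioi)
    (ae_of_all _ fun _ => le_rfl) (ae_of_all _ (gammaPDFReal_nonneg hp hc))
    (ae_restrict_of_forall_mem measurableSet_Ioi hg0) ha
    (ae_restrict_of_forall_mem measurableSet_Ioi fun r hr => ?_) ?_ ?_
  · nlinarith [gammaPDFReal_nonneg hp hc r, hle r hr]
  · simp [setLIntegral_Ioi_gammaPDFReal hp hc, heq]
  · simp [heq]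

lemma antitoneOn_Ioi_of_deriv_nonpos {f : ℝ → ℝ} (hf : ∀ t > 0, DifferentiableAt ℝ f t)
    (hf' : ∀ t > 0, deriv f t ≤ 0) : AntitoneOn f (Ioi 0) :=
  antitoneOn_of_deriv_nonpos (convex_Ioi 0)
    (fun t ht => (hf t ht).continuousAt.continuousWithinAt)
    (by rw [interior_Ioi]; exact fun t ht => (hf t ht).differentiableWithinAt)
    (by rw [interior_Ioi]; exact hf')

lemma eqOn_exp_mul_const_iff {c a : ℝ} {X : ℝ → ℝ} {s : Set ℝ} :
    EqOn (fun r => exp (c * r) * X r) (fun _ => a) s ↔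
      EqOn X (fun t => exp (-(c * t)) * a) s :=
  forall₂_congr fun _ _ => by dsimp only; rw [exp_neg, eq_inv_mul_iff_mul_eq₀ (exp_pos _).ne']

lemma tendsto_exp_mul_toReal_of_tendsto_ofReal {c : ℝ} {X : ℝ → ℝ} {y : ℝ≥0∞}
    (hX : ∀ t > 0, 0 ≤ X t) (hy : y ≠ ∞)
    (hlim : Tendsto (fun t => ENNReal.ofReal (X t)) (𝓝[>] 0) (𝓝 y)) :
    Tendsto (fun r => exp (c * r) * X r) (𝓝[>] 0) (𝓝 y.toReal) := by
  have hXlim : Tendsto X (𝓝[>] 0) (𝓝 y.toReal) :=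
    ((ENNReal.tendsto_toReal hy).comp hlim).congr'
      (eventually_mem_nhdsWithin.mono fun t ht => ENNReal.toReal_ofReal (hX t ht))
  have hexp : Continuous fun r => exp (c * r) := by fun_prop
  simpa using ((hexp.tendsto 0).mono_left nhdsWithin_le_nhds).mul hXlim

lemma tendsto_of_eqOn_exp_neg_mul {c a : ℝ} {X : ℝ → ℝ}
    (hX : EqOn X (fun t => exp (-(c * t)) * a) (Ioi 0)) : Tendsto X (𝓝[>] 0) (𝓝 a) := by
  have hcont : Continuous fun t => exp (-(c * t)) * a := by fun_prop
  exact tendsto_nhdsWithin_congr (fun t ht => (hX ht).symm)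
    (by simpa using (hcont.tendsto 0).mono_left nhdsWithin_le_nhds)

theorem stmt1_general (c : ℝ) (hc : 0 < c) (X : ℝ → ℝ)
    (hXpos : ∀ t > 0, 0 ≤ X t)
    (hXdiff : ∀ t > 0, DifferentiableAt ℝ X t)
    (hXe : ∀ t > 0, deriv (fun s => Real.exp (c * s) * X s) t ≤ 0)
    (Y : ℝ → ℝ≥0∞)
    (hY : ∀ p > (0 : ℝ),
      Y p = ENNReal.ofReal p * ∫⁻ r in Ioi (0 : ℝ), ENNReal.ofReal (r ^ (p - 1) * X r))
    (hY0 : Tendsto (fun t => ENNReal.ofReal (X t)) (nhdsWithin 0 (Ioi 0)) (nhds (Y 0)))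
    (p₁ p₂ : ℝ) (hp₁ : 0 ≤ p₁) (hp₁₂ : p₁ < p₂) :
    (ENNReal.ofReal (c ^ p₂ / Real.Gamma (p₂ + 1)) * Y p₂ =
        ENNReal.ofReal (c ^ p₁ / Real.Gamma (p₁ + 1)) * Y p₁ ∧
      ENNReal.ofReal (c ^ p₁ / Real.Gamma (p₁ + 1)) * Y p₁ < ∞) ↔
      ∃ X₀ : ℝ, Tendsto X (nhdsWithin 0 (Ioi 0)) (nhds X₀) ∧
        ∀ t > (0 : ℝ), X t = Real.exp (-(c * t)) * X₀ := by
  set g : ℝ → ℝ := fun r => exp (c * r) * X r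
  have hgdiff : ∀ t > 0, DifferentiableAt ℝ g t := fun t ht =>
    ((differentiableAt_id.const_mul c).exp).mul (hXdiff t ht)
  have hgc : ContinuousOn g (Ioi 0) := fun t ht => (hgdiff t ht).continuousAt.continuousWithinAt
  have hg_anti : AntitoneOn g (Ioi 0) := antitoneOn_Ioi_of_deriv_nonpos hgdiff hXe
  have hg0 : ∀ r > 0, 0 ≤ g r := fun r hr => mul_nonneg (exp_pos _).le (hXpos r hr)
  have hM : ∀ p > 0, ENNReal.ofReal (c ^ p / Gamma (p + 1)) * Y p = gammaMean p c g :=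
    fun p hp => by rw [hY p hp]; exact ofReal_rpow_div_Gamma_mul_eq_gammaMean hp hc X
  have hp₂ : 0 < p₂ := hp₁.trans_lt hp₁₂
  constructor
  · rintro ⟨heq, hfin⟩
    obtain ⟨a, ha⟩ : ∃ a, EqOn g (fun _ => a) (Ioi 0) := by
      rcases hp₁.eq_or_lt with rfl | hp₁
      · simp only [rpow_zero, zero_add, Gamma_one, div_one, ENNReal.ofReal_one, one_mul]
          at heq hfin
        refine ⟨_, eqOn_const_of_gammaMean_eq_of_tendsto hp₂ hc hg_anti hgc hg0
          (tendsto_exp_mul_toReal_of_tendsto_ofReal hXpos hfin.ne hY0) ?_⟩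
        rw [← hM p₂ hp₂, heq, ENNReal.ofReal_toReal hfin.ne]
      · rw [hM p₂ hp₂, hM p₁ hp₁] at heq
        rw [hM p₁ hp₁] at hfin
        exact eqOn_const_of_gammaMean_eq hp₁ hp₁₂ hc hg_anti hgc hg0 heq hfin.ne
    have hX := eqOn_exp_mul_const_iff.mp ha
    exact ⟨a, tendsto_of_eqOn_exp_neg_mul hX, fun t ht => hX ht⟩
  · rintro ⟨X₀, hlim, hX⟩
    have hg : EqOn g (fun _ => X₀) (Ioi 0) := eqOn_exp_mul_const_iff.mpr hX
    have hY0 : Y 0 = ENNReal.ofReal X₀ :=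
      tendsto_nhds_unique hY0 ((ENNReal.continuous_ofReal.tendsto _).comp hlim)
    have hval : ∀ p ≥ 0, ENNReal.ofReal (c ^ p / Gamma (p + 1)) * Y p = ENNReal.ofReal X₀ := by
      intro p hp
      rcases hp.eq_or_lt with rfl | hp
      · simp [hY0]
      · rw [hM p hp, gammaMean_of_eqOn_const hp hc hg]
    rw [hval p₂ hp₂.le, hval p₁ hp₁]
    exact ⟨rfl, ENNReal.ofReal_lt_top⟩

/-- Equality case of the optimal monotonicity: with `Y p = -∫₀^∞ r^p dX(r)` as before,
for `0 ≤ p₁ < p₂ < ∞` one has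
`c^{p₂} Y_{p₂}/Γ(p₂+1) = c^{p₁} Y_{p₁}/Γ(p₁+1) < ∞` if and only if
`X(0⁺) < ∞` and `X(t) = e^{-ct} X(0⁺)` for all `t > 0`. -/
theorem stmt1 (c : ℝ) (hc : 0 < c) (X : ℝ → ℝ)
    (hXpos : ∀ t > 0, 0 ≤ X t)
    (hXdiff : ∀ t > 0, DifferentiableAt ℝ X t)
    (hX' : ∀ t > 0, deriv X t ≤ 0)
    (hXe : ∀ t > 0, deriv (fun s => Real.exp (c * s) * X s) t ≤ 0)
    (Y : ℝ → ℝ≥0∞)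
    (hY : ∀ p > (0 : ℝ),
      Y p = ENNReal.ofReal p * ∫⁻ r in Ioi (0 : ℝ), ENNReal.ofReal (r ^ (p - 1) * X r))
    (hY0 : Tendsto (fun t => ENNReal.ofReal (X t)) (nhdsWithin 0 (Ioi 0)) (nhds (Y 0)))
    (p₁ p₂ : ℝ) (hp₁ : 0 ≤ p₁) (hp₁₂ : p₁ < p₂) :
    (ENNReal.ofReal (c ^ p₂ / Real.Gamma (p₂ + 1)) * Y p₂ =
        ENNReal.ofReal (c ^ p₁ / Real.Gamma (p₁ + 1)) * Y p₁ ∧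
      ENNReal.ofReal (c ^ p₁ / Real.Gamma (p₁ + 1)) * Y p₁ < ∞) ↔
      ∃ X₀ : ℝ, Tendsto X (nhdsWithin 0 (Ioi 0)) (nhds X₀) ∧
        ∀ t > (0 : ℝ), X t = Real.exp (-(c * t)) * X₀ :=
  stmt1_general c hc X hXpos hXdiff hXe Y hY hY0 p₁ p₂ hp₁ hp₁₂
end

section
/- Let $c>0$, $p>0$, and let $X:(0,\infty)\to[0,\infty)$ be differentiable with $\frac{d}{dt}(e^{ct}X(t))\le 0$ for $t>0$. Then for every $t>0$, $t^p X(t)+p\int_t^\infty r^{p-1}X(r)\,dr\le c\,X(t)\,e^{ct}\int_t^\infty r^p e^{-cr}\,dr$. -/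
open MeasureTheory Set

/- Since `s ↦ e^{cs} X(s)` is antitone, `X(r) ≤ X(t) e^{ct} e^{-cr}` for `r ≥ t`, so the left side is
at most `X(t) e^{ct} (t^p e^{-ct} + p ∫_t^∞ r^{p-1} e^{-cr} dr)`; integrating `(r^p e^{-cr})'` over
`(t, ∞)` identifies the bracket with `c ∫_t^∞ r^p e^{-cr} dr`. -/

theorem le_mul_exp_neg_of_deriv_exp_mul_nonpos {c : ℝ} {X : ℝ → ℝ}
    (hXdiff : ∀ t > 0, DifferentiableAt ℝ X t)
    (hXe : ∀ t > 0, deriv (fun s => Real.exp (c * s) * X s) t ≤ 0)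
    {t r : ℝ} (ht : 0 < t) (htr : t ≤ r) :
    X r ≤ X t * Real.exp (c * t) * Real.exp (-(c * r)) := by
  have hdiff : ∀ s > 0, DifferentiableAt ℝ (fun s => Real.exp (c * s) * X s) s := fun s hs =>
    ((differentiableAt_id.const_mul c).exp).mul (hXdiff s hs)
  have hanti : AntitoneOn (fun s => Real.exp (c * s) * X s) (Ici t) := by
    apply antitoneOn_of_deriv_nonpos (convex_Ici t)
    · exact fun s hs => (hdiff s (ht.trans_le hs)).continuousAt.continuousWithinAt
    · rw [interior_Ici]
      exact fun s hs => (hdiff s (ht.trans hs)).differentiableWithinAt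
    · rw [interior_Ici]
      exact fun s hs => hXe s (ht.trans hs)
  have hrt : Real.exp (c * r) * X r ≤ Real.exp (c * t) * X t :=
    hanti self_mem_Ici htr htr
  calc X r = Real.exp (-(c * r)) * (Real.exp (c * r) * X r) := by
        rw [← mul_assoc, ← Real.exp_add, neg_add_cancel, Real.exp_zero, one_mul]
    _ ≤ Real.exp (-(c * r)) * (Real.exp (c * t) * X t) :=
        mul_le_mul_of_nonneg_left hrt (Real.exp_pos _).le
    _ = X t * Real.exp (c * t) * Real.exp (-(c * r)) := by ring

theorem integrableOn_Ioi_rpow_mul_exp_neg_mul {c q t : ℝ} (hc : 0 < c) (hq : -1 < q)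
    (ht : 0 ≤ t) : IntegrableOn (fun r : ℝ => r ^ q * Real.exp (-(c * r))) (Ioi t) := by
  have h := integrableOn_rpow_mul_exp_neg_mul_rpow hq zero_lt_one hc
  simp only [Real.rpow_one, neg_mul] at h
  exact h.mono_set (Ioi_subset_Ioi ht)

theorem hasDerivAt_rpow_mul_exp_neg_mul (c p : ℝ) {x : ℝ} (hx : x ≠ 0) :
    HasDerivAt (fun r : ℝ => r ^ p * Real.exp (-(c * r)))
      (p * (x ^ (p - 1) * Real.exp (-(c * x))) - c * (x ^ p * Real.exp (-(c * x)))) x := by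
  have hexp : HasDerivAt (fun r : ℝ => Real.exp (-(c * r))) (Real.exp (-(c * x)) * -c) x :=
    (((hasDerivAt_id x).const_mul c).neg.congr_deriv (by simp)).exp
  exact ((Real.hasDerivAt_rpow_const (p := p) (Or.inl hx)).fun_mul hexp).congr_deriv (by ring)

theorem mul_integral_Ioi_rpow_mul_exp_neg_mul {c p t : ℝ} (hc : 0 < c) (hp : 0 < p)
    (ht : 0 < t) :
    c * ∫ r in Ioi t, r ^ p * Real.exp (-(c * r)) =
      t ^ p * Real.exp (-(c * t)) + p * ∫ r in Ioi t, r ^ (p - 1) * Real.exp (-(c * r)) := by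
  have hint_p := integrableOn_Ioi_rpow_mul_exp_neg_mul hc (by linarith : -1 < p) ht.le
  have hint_p1 := integrableOn_Ioi_rpow_mul_exp_neg_mul hc (by linarith : -1 < p - 1) ht.le
  have hFTC := integral_Ioi_of_hasDerivAt_of_tendsto'
    (fun x hx => hasDerivAt_rpow_mul_exp_neg_mul c p (ht.trans_le hx).ne')
    ((hint_p1.const_mul p).sub (hint_p.const_mul c))
    (by simpa only [neg_mul] using tendsto_rpow_mul_exp_neg_mul_atTop_nhds_zero p c hc)
  rw [integral_sub (hint_p1.const_mul p) (hint_p.const_mul c), integral_const_mul,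
    integral_const_mul] at hFTC
  linarith

/-- Key pointwise estimate: if `X ≥ 0` is differentiable with `(e^{ct}X(t))' ≤ 0`, then
`t^p X(t) + p ∫_t^∞ r^{p-1} X(r) dr ≤ c X(t) e^{ct} ∫_t^∞ r^p e^{-cr} dr`. -/
theorem stmt3 (c p : ℝ) (hc : 0 < c) (hp : 0 < p) (X : ℝ → ℝ)
    (hXpos : ∀ t > 0, 0 ≤ X t)
    (hXdiff : ∀ t > 0, DifferentiableAt ℝ X t)
    (hXe : ∀ t > 0, deriv (fun s => Real.exp (c * s) * X s) t ≤ 0) :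
    ∀ t > (0 : ℝ),
      t ^ p * X t + p * ∫ r in Ioi t, r ^ (p - 1) * X r ≤
        c * X t * Real.exp (c * t) * ∫ r in Ioi t, r ^ p * Real.exp (-(c * r)) := by
  intro t ht
  have htail : ∫ r in Ioi t, r ^ (p - 1) * X r ≤
      X t * Real.exp (c * t) * ∫ r in Ioi t, r ^ (p - 1) * Real.exp (-(c * r)) := by
    rw [← integral_const_mul]
    refine integral_mono_of_nonneg ?_
      ((integrableOn_Ioi_rpow_mul_exp_neg_mul hc (by linarith) ht.le).const_mul _) ?_
    all_goals refine (ae_restrict_iff' measurableSet_Ioi).mpr (ae_of_all _ fun r hr => ?_)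
    · exact mul_nonneg (Real.rpow_nonneg (ht.trans hr).le _) (hXpos r (ht.trans hr))
    · calc r ^ (p - 1) * X r
          ≤ r ^ (p - 1) * (X t * Real.exp (c * t) * Real.exp (-(c * r))) :=
            mul_le_mul_of_nonneg_left
              (le_mul_exp_neg_of_deriv_exp_mul_nonpos hXdiff hXe ht (le_of_lt hr))
              (Real.rpow_nonneg (ht.trans hr).le _)
        _ = X t * Real.exp (c * t) * (r ^ (p - 1) * Real.exp (-(c * r))) := by ring
  have hexp : Real.exp (c * t) * Real.exp (-(c * t)) = 1 := by
    rw [← Real.exp_add, add_neg_cancel, Real.exp_zero]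
  calc t ^ p * X t + p * ∫ r in Ioi t, r ^ (p - 1) * X r
      ≤ t ^ p * X t * (Real.exp (c * t) * Real.exp (-(c * t))) +
          p * (X t * Real.exp (c * t) * ∫ r in Ioi t, r ^ (p - 1) * Real.exp (-(c * r))) := by
        rw [hexp, mul_one]
        gcongr
    _ = c * X t * Real.exp (c * t) * ∫ r in Ioi t, r ^ p * Real.exp (-(c * r)) := by
        linear_combination
          -(X t * Real.exp (c * t)) * mul_integral_Ioi_rpow_mul_exp_neg_mul hc hp ht
end

section
/- Let $c>0$ and $-1<p_1<0$. If $X$ is nonincreasing and nonnegative on $(0,\infty)$ with $e^{ct}X(t)$ nonincreasing, then $Y_0(0)\le \Big(\frac{\pi p_1}{\sin(\pi p_1)}\Big)\Big(\frac{c^{p_1}}{\Gamma(1+p_1)}\Big)Y_{p_1}(0)$, where $Y_q(0)=-\int_0^\infty r^q\,dX(r)$. -/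
open MeasureTheory Set
open scoped ENNReal

/-- For `-1 < p₁ < 0`: if `X` is nonincreasing and nonnegative on `(0,∞)` with
`e^{ct}X(t)` nonincreasing, and `μ = -dX` is the associated Stieltjes measure on `(0,∞)`
(so `Y_q(0) = ∫₀^∞ r^q dμ(r)` and `Y_0(0) = μ((0,∞))`), then
`Y_0(0) ≤ (π p₁ / sin(π p₁)) (c^{p₁}/Γ(1+p₁)) Y_{p₁}(0)`. -/
theorem stmt6 (c p₁ : ℝ) (hc : 0 < c) (hp₁ : -1 < p₁) (hp₁' : p₁ < 0)
    (X : ℝ → ℝ) (hXpos : ∀ t > 0, 0 ≤ X t)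
    (hXanti : AntitoneOn X (Ioi 0))
    (hXe : AntitoneOn (fun t => Real.exp (c * t) * X t) (Ioi 0))
    (μ : Measure ℝ)
    (hμ : ∀ t > (0 : ℝ), μ (Ioi t) = ENNReal.ofReal (X t))
    (hμ0 : μ (Iic 0) = 0) :
    μ univ ≤
      ENNReal.ofReal ((Real.pi * p₁ / Real.sin (Real.pi * p₁)) * (c ^ p₁ / Real.Gamma (1 + p₁))) *
        ∫⁻ r in Ioi (0 : ℝ), ENNReal.ofReal (r ^ p₁) ∂μ := by
  set q : ℝ := -p₁ with hq_def
  have hq0 : 0 < q := by simp only [hq_def]; linarith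
  set K : ℝ := (Real.pi * p₁ / Real.sin (Real.pi * p₁)) * (c ^ p₁ / Real.Gamma (1 + p₁))
    with hK_def
  -- the constant equals `c^{p₁} Γ(1-p₁)`
  have hΓpos : 0 < Real.Gamma (1 + p₁) := Real.Gamma_pos_of_pos (by linarith)
  have hsin : Real.sin (Real.pi * p₁) < 0 := by
    apply Real.sin_neg_of_neg_of_neg_pi_lt
    · nlinarith [Real.pi_pos]
    · nlinarith [Real.pi_pos]
  have hGadd : Real.Gamma (1 + p₁) = p₁ * Real.Gamma p₁ := by
    rw [add_comm]; exact Real.Gamma_add_one (by linarith)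
  have hGrefl : Real.Gamma p₁ * Real.Gamma (1 - p₁) = Real.pi / Real.sin (Real.pi * p₁) :=
    Real.Gamma_mul_Gamma_one_sub p₁
  have hΓp₁ : Real.Gamma p₁ ≠ 0 := by
    intro h; rw [h, mul_zero] at hGadd; exact hΓpos.ne' hGadd
  have hK : K = c ^ p₁ * Real.Gamma (1 - p₁) := by
    have hGrefl' : Real.Gamma p₁ * Real.Gamma (1 - p₁) * Real.sin (Real.pi * p₁) = Real.pi := by
      rw [hGrefl, div_mul_cancel₀ _ hsin.ne]
    rw [hK_def, div_mul_div_comm, div_eq_iff (mul_ne_zero hsin.ne hΓpos.ne'), hGadd]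
    linear_combination (-(c ^ p₁ * p₁)) * hGrefl'
  have hKpos : 0 < K := by
    rw [hK]
    exact mul_pos (Real.rpow_pos_of_pos hc p₁) (Real.Gamma_pos_of_pos (by linarith))
  set B := ∫⁻ r in Ioi (0 : ℝ), ENNReal.ofReal (r ^ p₁) ∂μ with hB_def
  by_cases hBtop : B = ⊤
  · rw [hBtop, ENNReal.mul_top (ENNReal.ofReal_pos.2 hKpos).ne']
    exact le_top
  -- μ univ = μ (Ioi 0) and it is finite and we may assume nonzero
  have hsplit : μ univ = μ (Ioi 0) := by
    have h1 : μ univ ≤ μ (Iic 0) + μ (Ioi 0) := by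
      rw [← Iic_union_Ioi (a := (0 : ℝ))]; exact measure_union_le _ _
    rw [hμ0, zero_add] at h1
    exact le_antisymm h1 (measure_mono (subset_univ _))
  have hmeasB : Measurable fun r : ℝ => ENNReal.ofReal (r ^ p₁) := by fun_prop
  have hIoc : μ (Ioc 0 1) ≤ B := by
    calc μ (Ioc 0 1) = ∫⁻ _ in Ioc (0 : ℝ) 1, 1 ∂μ := (setLIntegral_one _).symm
      _ ≤ ∫⁻ r in Ioc (0 : ℝ) 1, ENNReal.ofReal (r ^ p₁) ∂μ := by
          refine setLIntegral_mono hmeasB fun r hr => ?_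
          rw [show (1 : ℝ≥0∞) = ENNReal.ofReal 1 by simp]
          exact ENNReal.ofReal_le_ofReal
            (Real.one_le_rpow_of_pos_of_le_one_of_nonpos hr.1 hr.2 hp₁'.le)
      _ ≤ B := lintegral_mono_set Ioc_subset_Ioi_self
  have hAtop : μ univ ≠ ⊤ := by
    rw [hsplit]
    have h2 : μ (Ioi 0) ≤ μ (Ioc 0 1) + μ (Ioi 1) := by
      rw [← Ioc_union_Ioi_eq_Ioi (zero_le_one (α := ℝ))]; exact measure_union_le _ _
    refine ne_top_of_le_ne_top ?_ h2
    rw [hμ 1 one_pos]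
    exact ENNReal.add_ne_top.2 ⟨ne_top_of_le_ne_top hBtop hIoc, ENNReal.ofReal_ne_top⟩
  by_cases hA0 : μ univ = 0
  · rw [hA0]; exact zero_le
  set a : ℝ := (μ univ).toReal with ha_def
  have ha0 : 0 ≤ a := ENNReal.toReal_nonneg
  have hofa : ENNReal.ofReal a = μ univ := ENNReal.ofReal_toReal hAtop
  -- pointwise exponential bound on X
  have hXbound : ∀ t > 0, X t ≤ Real.exp (-(c * t)) * a := by
    intro t ht
    have key : Real.exp (c * t) * X t ≤ a := by
      have htends : Filter.Tendsto (fun s : ℝ => Real.exp (c * s) * a)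
          (nhdsWithin 0 (Ioi 0)) (nhds a) := by
        have h1 : Filter.Tendsto (fun s : ℝ => Real.exp (c * s) * a)
            (nhds 0) (nhds (Real.exp (c * 0) * a)) := by
          exact ((Real.continuous_exp.comp (continuous_const.mul continuous_id)).mul
            continuous_const).tendsto 0
        simpa using h1.mono_left nhdsWithin_le_nhds
      refine ge_of_tendsto htends ?_
      filter_upwards [Ioo_mem_nhdsGT_of_mem (left_mem_Ico.2 ht)] with s hs
      have h1 : Real.exp (c * t) * X t ≤ Real.exp (c * s) * X s :=
        hXe (mem_Ioi.2 hs.1) (mem_Ioi.2 ht) hs.2.le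
      have h2 : X s ≤ a := by
        refine (ENNReal.ofReal_le_ofReal_iff ha0).1 ?_
        rw [← hμ s hs.1, hofa]
        exact measure_mono (subset_univ _)
      calc Real.exp (c * t) * X t ≤ Real.exp (c * s) * X s := h1
        _ ≤ Real.exp (c * s) * a := by
            exact mul_le_mul_of_nonneg_left h2 (Real.exp_pos _).le
    have h3 := mul_le_mul_of_nonneg_left key (Real.exp_pos (-(c * t))).le
    rwa [← mul_assoc, ← Real.exp_add, neg_add_cancel, Real.exp_zero, one_mul] at h3
  -- the monotonicity bound on `C = ∫ r^q dμ`
  set C := ∫⁻ r in Ioi (0 : ℝ), ENNReal.ofReal (r ^ q) ∂μ with hC_def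
  have hC_bound : C ≤ ENNReal.ofReal (K * a) := by
    have f_nn : 0 ≤ᵐ[μ.restrict (Ioi (0:ℝ))] (fun r : ℝ => r) :=
      (ae_restrict_iff' measurableSet_Ioi).2 (Filter.Eventually.of_forall fun r hr => hr.le)
    have layer := lintegral_rpow_eq_lintegral_meas_lt_mul (μ.restrict (Ioi (0:ℝ)))
      f_nn aemeasurable_id hq0
    rw [hC_def, layer]
    have inner_le : ∫⁻ t in Ioi (0:ℝ),
        (μ.restrict (Ioi 0)) {a : ℝ | t < a} * ENNReal.ofReal (t ^ (q - 1))
        ≤ ∫⁻ t in Ioi (0:ℝ),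
          ENNReal.ofReal (a * (t ^ (q - 1) * Real.exp (-(c * t)))) := by
      refine lintegral_mono_ae ((ae_restrict_iff' measurableSet_Ioi).2
        (Filter.Eventually.of_forall fun t ht => ?_))
      have hset : {a : ℝ | t < a} = Ioi t := rfl
      rw [hset, Measure.restrict_apply measurableSet_Ioi,
        inter_eq_left.2 (Ioi_subset_Ioi ht.le), hμ t ht,
        ← ENNReal.ofReal_mul (hXpos t ht)]
      apply ENNReal.ofReal_le_ofReal
      have htq : (0:ℝ) ≤ t ^ (q - 1) := Real.rpow_nonneg ht.le _
      nlinarith [mul_le_mul_of_nonneg_right (hXbound t ht) htq]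
    have int1 : IntegrableOn (fun t : ℝ => t ^ (q - 1) * Real.exp (-(c * t))) (Ioi 0) := by
      have h := integrableOn_rpow_mul_exp_neg_mul_rpow (p := 1) (s := q - 1) (b := c)
        (by linarith) zero_lt_one hc
      refine h.congr_fun (fun t ht => ?_) measurableSet_Ioi
      beta_reduce
      rw [Real.rpow_one, neg_mul]
    have gamma_int : ∫⁻ t in Ioi (0:ℝ),
        ENNReal.ofReal (a * (t ^ (q - 1) * Real.exp (-(c * t))))
        = ENNReal.ofReal (a * ((1 / c) ^ q * Real.Gamma q)) := by
      rw [← MeasureTheory.ofReal_integral_eq_lintegral_ofReal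
        (int1.const_mul a) ((ae_restrict_iff' measurableSet_Ioi).2
          (Filter.Eventually.of_forall fun t ht => mul_nonneg ha0
            (mul_nonneg (Real.rpow_nonneg (le_of_lt ht) _) (Real.exp_pos _).le)))]
      rw [MeasureTheory.integral_const_mul, Real.integral_rpow_mul_exp_neg_mul_Ioi hq0 hc]
    have hKa : q * (a * ((1 / c) ^ q * Real.Gamma q)) = K * a := by
      have h1 : (1 / c : ℝ) ^ q = c ^ p₁ := by
        rw [one_div, Real.inv_rpow hc.le, ← Real.rpow_neg hc.le]
        congr 1
        simp [hq_def]
      have h2 : q * Real.Gamma q = Real.Gamma (1 - p₁) := by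
        rw [show (1 - p₁ : ℝ) = q + 1 by simp [hq_def]; ring,
          Real.Gamma_add_one hq0.ne']
      rw [hK, ← h1, ← h2]
      ring
    calc ENNReal.ofReal q * ∫⁻ t in Ioi (0:ℝ),
          (μ.restrict (Ioi 0)) {a : ℝ | t < a} * ENNReal.ofReal (t ^ (q - 1))
        ≤ ENNReal.ofReal q * ENNReal.ofReal (a * ((1 / c) ^ q * Real.Gamma q)) := by
          rw [← gamma_int]; exact mul_le_mul_right inner_le _
      _ = ENNReal.ofReal (K * a) := by
          rw [← ENNReal.ofReal_mul hq0.le, hKa]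
  -- Cauchy–Schwarz
  have hCS : μ univ ≤ B ^ (1 / 2 : ℝ) * C ^ (1 / 2 : ℝ) := by
    have hconj : Real.HolderConjugate 2 2 := Real.holderConjugate_iff.mpr ⟨one_lt_two, by norm_num⟩
    have hfm : AEMeasurable (fun r : ℝ => ENNReal.ofReal (r ^ (p₁ / 2)))
        (μ.restrict (Ioi 0)) := by fun_prop
    have hgm : AEMeasurable (fun r : ℝ => ENNReal.ofReal (r ^ (q / 2)))
        (μ.restrict (Ioi 0)) := by fun_prop
    have key := ENNReal.lintegral_mul_le_Lp_mul_Lq (μ.restrict (Ioi (0:ℝ))) hconj hfm hgm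
    have hexp0 : p₁ / 2 + q / 2 = 0 := by rw [hq_def]; ring
    have lhs_eq : ∫⁻ r, ((fun r : ℝ => ENNReal.ofReal (r ^ (p₁ / 2))) *
        fun r : ℝ => ENNReal.ofReal (r ^ (q / 2))) r ∂(μ.restrict (Ioi 0)) = μ univ := by
      have hone : ∀ᵐ r ∂(μ.restrict (Ioi (0:ℝ))),
          ((fun r : ℝ => ENNReal.ofReal (r ^ (p₁ / 2))) *
            fun r : ℝ => ENNReal.ofReal (r ^ (q / 2))) r = (fun _ : ℝ => (1:ℝ≥0∞)) r := by
        refine (ae_restrict_iff' measurableSet_Ioi).2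
          (Filter.Eventually.of_forall fun r hr => ?_)
        simp only [Pi.mul_apply]
        rw [← ENNReal.ofReal_mul (Real.rpow_nonneg (le_of_lt hr) _), ← Real.rpow_add hr,
          hexp0, Real.rpow_zero, ENNReal.ofReal_one]
      rw [lintegral_congr_ae hone, lintegral_one, Measure.restrict_apply_univ, ← hsplit]
    have f2 : ∫⁻ r, (fun r : ℝ => ENNReal.ofReal (r ^ (p₁ / 2))) r ^ (2:ℝ)
        ∂(μ.restrict (Ioi 0)) = B := by
      rw [hB_def]
      refine lintegral_congr_ae ((ae_restrict_iff' measurableSet_Ioi).2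
        (Filter.Eventually.of_forall fun r hr => ?_))
      show ENNReal.ofReal (r ^ (p₁ / 2)) ^ (2:ℝ) = ENNReal.ofReal (r ^ p₁)
      rw [ENNReal.ofReal_rpow_of_nonneg (Real.rpow_nonneg (le_of_lt hr) _) (by norm_num),
        ← Real.rpow_mul (le_of_lt hr)]
      norm_num
    have g2 : ∫⁻ r, (fun r : ℝ => ENNReal.ofReal (r ^ (q / 2))) r ^ (2:ℝ)
        ∂(μ.restrict (Ioi 0)) = C := by
      rw [hC_def]
      refine lintegral_congr_ae ((ae_restrict_iff' measurableSet_Ioi).2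
        (Filter.Eventually.of_forall fun r hr => ?_))
      show ENNReal.ofReal (r ^ (q / 2)) ^ (2:ℝ) = ENNReal.ofReal (r ^ q)
      rw [ENNReal.ofReal_rpow_of_nonneg (Real.rpow_nonneg (le_of_lt hr) _) (by norm_num),
        ← Real.rpow_mul (le_of_lt hr)]
      norm_num
    rw [lhs_eq, f2, g2] at key
    exact key
  -- combine
  have hchain : μ univ ≤ (ENNReal.ofReal K * B) ^ (1 / 2 : ℝ) * (μ univ) ^ (1 / 2 : ℝ) := by
    calc μ univ ≤ B ^ (1 / 2 : ℝ) * C ^ (1 / 2 : ℝ) := hCS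
      _ ≤ B ^ (1 / 2 : ℝ) * (ENNReal.ofReal (K * a)) ^ (1 / 2 : ℝ) := by
          gcongr
      _ = (ENNReal.ofReal K * B) ^ (1 / 2 : ℝ) * (μ univ) ^ (1 / 2 : ℝ) := by
          rw [ENNReal.ofReal_mul hKpos.le, hofa,
            ENNReal.mul_rpow_of_nonneg _ _ (by norm_num : (0:ℝ) ≤ 1 / 2),
            ENNReal.mul_rpow_of_nonneg _ _ (by norm_num : (0:ℝ) ≤ 1 / 2)]
          ring
  have hA12ne : (μ univ) ^ (1 / 2 : ℝ) ≠ 0 := by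
    simp [ENNReal.rpow_eq_zero_iff, hA0, hAtop]
  have hA12top : (μ univ) ^ (1 / 2 : ℝ) ≠ ⊤ := by
    simp [ENNReal.rpow_eq_top_iff, hA0, hAtop]
  have hhalf : (μ univ) ^ (1 / 2 : ℝ) ≤ (ENNReal.ofReal K * B) ^ (1 / 2 : ℝ) := by
    rw [← ENNReal.mul_le_mul_iff_left hA12ne hA12top,
      ← ENNReal.rpow_add _ _ hA0 hAtop]
    have e1 : (1 / 2 : ℝ) + 1 / 2 = 1 := by norm_num
    rw [e1, ENNReal.rpow_one]
    exact hchain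
  have final := ENNReal.rpow_le_rpow hhalf (by norm_num : (0:ℝ) ≤ 2)
  rw [← ENNReal.rpow_mul, ← ENNReal.rpow_mul] at final
  have e2 : (1 / 2 : ℝ) * 2 = 1 := by norm_num
  rw [e2, ENNReal.rpow_one, ENNReal.rpow_one] at final
  exact final
end

section
/- Let $f$ be a conformal map from a bounded simply-connected domain $\Omega\subset\mathbb{C}$ onto a disk $D(b,R)$, let $a\in\Omega$ with $f(a)\ne b$, and set $\delta=\overline{f(a)-b}$, $\lambda=(R^2-|\delta|^2)/R$. If the area of $\{z\in\Omega:g_\Omega(z,a)>t\}$ weighted by $|f'|^2$ equals $e^{-4\pi t}$ times its value at $t=0$ for all $t\ge0$, then $\pi R^2 e^{-4\pi t}\le \pi\lambda^2 e^{-4\pi t}$ for large $t$, a contradiction since $0<\lambda<R$. Hence the level-set area identity $\int_{\{g_\Omega(\cdot,a)>t\}}|f'|^2dA=e^{-4\pi t}\int_\Omega|f'|^2dA$ forces $b=f(a)$. -/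
/-!
Suppose `a' ≠ b` and put `c = ‖a' - b‖`, `λ = (R² - c²) / R`. Since
`R² - conj (w - b) (a' - b) = (R² - c²) - conj (w - a') (a' - b)`, the triangle inequality bounds the
exponentiated Green function by `λ / ‖w - a'‖ + c / R`, so its superlevel set at height `K > c / R`
lies in the disk of radius `λ / (K - c / R)` about `a'`. For `K > R / c` this radius is smaller than
`R / K`, so at level `t = log K / 2π` the superlevel set has area `< π R² e^{-4πt}`.
-/

open MeasureTheory Set

open ComplexConjugate Metric Real

/-- `g_{D(b,R)}(w, a') = (2π)⁻¹ log ‖diskGreenRatio b a' R w‖`. -/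
noncomputable def diskGreenRatio (b a' : ℂ) (R : ℝ) (w : ℂ) : ℂ :=
  (R ^ 2 - conj (w - b) * (a' - b)) / (R * (w - a'))

lemma sub_conj_mul_eq (z b a' w : ℂ) :
    z - conj (w - b) * (a' - b) = z - ‖a' - b‖ ^ 2 - conj (w - a') * (a' - b) := by
  have hsplit : conj (w - b) = conj (w - a') + conj (a' - b) := by rw [← map_add]; ring_nf
  rw [hsplit, ← Complex.conj_mul']
  ring

lemma norm_diskGreenRatio_le {b a' : ℂ} {R : ℝ} (hR : 0 < R) (ha' : ‖a' - b‖ ≤ R) (w : ℂ) :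
    ‖diskGreenRatio b a' R w‖ ≤ (R ^ 2 - ‖a' - b‖ ^ 2) / (R * ‖w - a'‖) + ‖a' - b‖ / R := by
  have hnn : 0 ≤ R ^ 2 - ‖a' - b‖ ^ 2 := by nlinarith [norm_nonneg (a' - b)]
  rcases eq_or_ne w a' with rfl | hw
  · simp only [diskGreenRatio, sub_self, mul_zero, div_zero, norm_zero]
    positivity
  have hu : 0 < ‖w - a'‖ := norm_pos_iff.2 (sub_ne_zero.2 hw)
  have hnum : ‖(R : ℂ) ^ 2 - conj (w - b) * (a' - b)‖
      ≤ R ^ 2 - ‖a' - b‖ ^ 2 + ‖w - a'‖ * ‖a' - b‖ := by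
    rw [sub_conj_mul_eq]
    calc _ ≤ ‖(R : ℂ) ^ 2 - ‖a' - b‖ ^ 2‖ + ‖conj (w - a') * (a' - b)‖ := norm_sub_le _ _
      _ = _ := by
        rw [norm_mul, Complex.norm_conj, ← Complex.ofReal_pow, ← Complex.ofReal_pow,
          ← Complex.ofReal_sub, Complex.norm_real, Real.norm_of_nonneg hnn]
  rw [diskGreenRatio, norm_div, norm_mul, Complex.norm_real, Real.norm_of_nonneg hR.le]
  calc _ ≤ (R ^ 2 - ‖a' - b‖ ^ 2 + ‖w - a'‖ * ‖a' - b‖) / (R * ‖w - a'‖) := by gcongr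
    _ = _ := by field_simp

lemma mem_ball_of_lt_norm_diskGreenRatio {b a' w : ℂ} {R K : ℝ} (hR : 0 < R)
    (ha' : ‖a' - b‖ ≤ R) (hK : ‖a' - b‖ / R < K) (hw : K < ‖diskGreenRatio b a' R w‖) :
    w ∈ ball a' ((R ^ 2 - ‖a' - b‖ ^ 2) / (R * K - ‖a' - b‖)) := by
  have hRK : 0 < R * K - ‖a' - b‖ := by rw [div_lt_iff₀ hR] at hK; linarith
  have hlt := hw.trans_le (norm_diskGreenRatio_le hR ha' w)
  have hu : 0 < ‖w - a'‖ := by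
    by_contra h
    rw [le_antisymm (not_lt.1 h) (norm_nonneg _), mul_zero, div_zero, zero_add] at hlt
    exact hK.not_gt hlt
  rw [mem_ball, dist_eq_norm, lt_div_iff₀ hRK]
  rw [div_add_div _ _ (by positivity) hR.ne', lt_div_iff₀ (by positivity)] at hlt
  nlinarith

lemma mem_ball_of_lt_log_norm_diskGreenRatio {b a' w : ℂ} {R t : ℝ} (hR : 0 < R)
    (ha' : ‖a' - b‖ ≤ R) (ht : 0 ≤ t) (hK : ‖a' - b‖ / R < exp (2 * π * t))
    (hw : 2 * π * t < log ‖diskGreenRatio b a' R w‖) :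
    w ∈ ball a' ((R ^ 2 - ‖a' - b‖ ^ 2) / (R * exp (2 * π * t) - ‖a' - b‖)) := by
  have hq : 1 < ‖diskGreenRatio b a' R w‖ :=
    (log_pos_iff (norm_nonneg _)).1 ((by positivity : 0 ≤ 2 * π * t).trans_lt hw)
  exact mem_ball_of_lt_norm_diskGreenRatio hR ha' hK
    ((lt_log_iff_exp_lt (by linarith)).1 hw)

lemma volume_ball_eq_ofReal_pi_mul_sq (z : ℂ) {r : ℝ} (hr : 0 ≤ r) :
    volume (ball z r) = ENNReal.ofReal (π * r ^ 2) := by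
  rw [Complex.volume_ball, ← ENNReal.ofReal_pow hr, ← ENNReal.ofReal_coe_nnreal,
    ← ENNReal.ofReal_mul (by positivity), NNReal.coe_real_pi, mul_comm]

/-- If the superlevel sets of the Green function of the disk `D(b,R)` with pole `a'`
have areas `π R² e^{-4πt}` for all `t ≥ 0` (as forced by the level-set area identity
`∫_{{g_Ω(·,a)>t}} |f'|² dA = e^{-4πt} ∫_Ω |f'|² dA` under a conformal map `f` of `Ω`
onto `D(b,R)` with `a' = f(a)`), then the pole must be the center: `a' = b`. -/
theorem stmt16 (b a' : ℂ) (R : ℝ) (hR : 0 < R) (ha' : a' ∈ Metric.ball b R)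
    (harea : ∀ t ≥ (0 : ℝ),
      volume {w : ℂ | w ∈ Metric.ball b R ∧
          2 * Real.pi * t <
            Real.log (norm ((R ^ 2 - (starRingEnd ℂ) (w - b) * (a' - b)) /
              (R * (w - a')))) } =
        ENNReal.ofReal (Real.pi * R ^ 2 * Real.exp (-(4 * Real.pi * t)))) :
    a' = b := by
  by_contra hab
  set c := ‖a' - b‖
  have hc : 0 < c := norm_pos_iff.2 (sub_ne_zero.2 hab)
  have hcR : c < R := by rwa [mem_ball, dist_eq_norm] at ha'
  set K := 2 * R / c
  have hKc : R < K * c := by simp only [K]; field_simp; linarith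
  have hK : 1 < K := by rw [one_lt_div hc]; linarith
  set t := log K / (2 * π)
  have hexp : exp (2 * π * t) = K := by
    rw [mul_div_cancel₀ _ (by positivity), exp_log (by linarith)]
  have ht : 0 ≤ t := div_nonneg (log_nonneg hK.le) (by positivity)
  set ρ := (R ^ 2 - c ^ 2) / (R * K - c)
  have hsub : {w : ℂ | w ∈ ball b R ∧ 2 * π * t < log ‖diskGreenRatio b a' R w‖} ⊆ ball a' ρ := by
    have hcK : c / R < exp (2 * π * t) := by rw [hexp, div_lt_iff₀ hR]; nlinarith
    intro w hw
    change w ∈ ball a' ((R ^ 2 - c ^ 2) / (R * K - c))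
    rw [← hexp]
    exact mem_ball_of_lt_log_norm_diskGreenRatio hR hcR.le ht hcK hw.2
  have hρ : 0 < ρ := div_pos (by nlinarith) (by nlinarith)
  have hρK : ρ < R / K := by
    rw [div_lt_div_iff₀ (by nlinarith) (by linarith)]; nlinarith
  have hexp4 : exp (-(4 * π * t)) = (K ^ 2)⁻¹ := by
    rw [show 4 * π * t = 2 * π * t + 2 * π * t by ring, exp_neg, exp_add, hexp, sq]
  have hvol := (harea t ht).symm.trans_le (measure_mono hsub)
  rw [volume_ball_eq_ofReal_pi_mul_sq _ hρ.le, ENNReal.ofReal_le_ofReal_iff (by positivity), hexp4,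
    mul_assoc, mul_le_mul_iff_right₀ pi_pos, ← div_eq_mul_inv, ← div_pow] at hvol
  exact (pow_lt_pow_left₀ hρK hρ.le two_ne_zero).not_ge hvol
end
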